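/- Let I = a + Σ_{i=1}^n a_i∂^{-1}b_i ∈ F⟨∂^{-1}⟩ with n = L(I). Then Pol(I) = Ca_1 + ⋯ + Ca_n, the C-linear span of a_1, …, a_n. -/

import Mathlib

open Finset

/-- A derivation on a field `F`. -/
structure IsDerivation {F : Type*} [Field F] (d : F → F) : Prop where
  map_add : ∀ a b : F, d (a + b) = d a + d b
  leibniz : ∀ a b : F, d (a * b) = d a * b + a * d b

namespace IsDerivation

variable {F : Type*} [Field F] {d : F → F}

theorem map_zero' (hd : IsDerivation d) : d 0 = 0 := by
  have h := hd.map_add 0 0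
  simp only [add_zero] at h
  exact (left_eq_add.mp h)

theorem map_one' (hd : IsDerivation d) : d 1 = 0 := by
  have h := hd.leibniz 1 1
  simp only [mul_one, one_mul] at h
  exact (left_eq_add.mp h)

theorem map_neg' (hd : IsDerivation d) (a : F) : d (-a) = - d a := by
  have h := hd.map_add a (-a)
  simp only [add_neg_cancel, hd.map_zero'] at h
  exact (neg_eq_of_add_eq_zero_right h.symm).symm

end IsDerivation

/-- The subfield of constants of a derivation. -/
def constants (F : Type*) [Field F] (d : F → F) (hd : IsDerivation d) : Subfield F where
  carrier := {a : F | d a = 0}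
  zero_mem' := hd.map_zero'
  one_mem' := hd.map_one'
  add_mem' := by
    intro a b ha hb
    simp only [Set.mem_setOf_eq] at *
    rw [hd.map_add, ha, hb, add_zero]
  neg_mem' := by
    intro a ha
    simp only [Set.mem_setOf_eq] at *
    rw [hd.map_neg', ha, neg_zero]
  mul_mem' := by
    intro a b ha hb
    simp only [Set.mem_setOf_eq] at *
    rw [hd.leibniz, ha, hb, zero_mul, mul_zero, add_zero]
  inv_mem' := by
    intro a ha
    simp only [Set.mem_setOf_eq] at *
    by_cases h0 : a = 0
    · rw [h0, inv_zero]; exact hd.map_zero'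
    · have h := hd.leibniz a a⁻¹
      rw [mul_inv_cancel₀ h0, hd.map_one', ha, zero_mul, zero_add] at h
      have h2 : a * d a⁻¹ = 0 := h.symm
      rcases mul_eq_zero.mp h2 with h3 | h3
      · exact absurd h3 h0
      · exact h3
/-- `A` is the ring of differential operators `F⟨∂⟩` over the differential field `(F, d)`:
it contains `F` via `ι`, an element `δ` (the symbol `∂`) satisfying `∂a = a∂ + a'`, and every
element has a unique expression `Σ ι(aᵢ) ∂^i`. -/
structure IsDiffOpRing {F : Type*} [Field F] (d : F → F) (A : Type*) [Ring A]
    (ι : F →+* A) (δ : A) : Prop where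
  comm : ∀ a : F, δ * ι a = ι a * δ + ι (d a)
  repr : ∀ P : A, ∃! c : ℕ →₀ F, P = c.sum fun i x => ι x * δ ^ i

/-- The action of the differential operator with coefficients `a 0, …, a n`
(i.e. `Σ_{i ≤ n} aᵢ ∂^i`) on an element `y` of `F`. -/
def diffOpAct {F : Type*} [Field F] (d : F → F) (n : ℕ) (a : ℕ → F) (y : F) : F :=
  ∑ i ∈ Finset.range (n + 1), a i * d^[i] y

/-- A differential field is linearly differentially closed if every differential operator of
positive degree has a nonzero zero. -/
def LinDiffClosed {F : Type*} [Field F] (d : F → F) : Prop :=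
  ∀ (n : ℕ) (a : ℕ → F), 0 < n → a n ≠ 0 → ∃ y : F, y ≠ 0 ∧ diffOpAct d n a y = 0

/-- `P ∈ F⟨∂⟩` has degree `n`, i.e. `P = Σ_{i ≤ n} ι(aᵢ) δ^i` with `aₙ ≠ 0`. -/
def HasDeg {F : Type*} [Field F] {A : Type*} [Ring A] (ι : F →+* A) (δ : A)
    (P : A) (n : ℕ) : Prop :=
  ∃ a : ℕ → F, a n ≠ 0 ∧ P = ∑ i ∈ Finset.range (n + 1), ι (a i) * δ ^ i

/-- `K` is the division ring of quotients of the (Ore) domain `A`: `A` embeds in `K` via `j`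
and every element of `K` has the form `P⁻¹ Q` with `P, Q ∈ A`, `P ≠ 0`. -/
structure IsQuotientDivisionRing (A : Type*) [Ring A] (K : Type*) [DivisionRing K]
    (j : A →+* K) : Prop where
  inj : Function.Injective j
  quot : ∀ f : K, ∃ P Q : A, P ≠ 0 ∧ f = (j P)⁻¹ * j Q

/-- `f = P⁻¹ Q` is a minimal presentation of `f ∈ F(∂)`: a presentation where `P` has the
smallest possible degree. -/
def IsMinPres {F : Type*} [Field F] {A : Type*} [Ring A] (ι : F →+* A) (δ : A)
    {K : Type*} [DivisionRing K] (j : A →+* K) (f : K) (P Q : A) : Prop :=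
  P ≠ 0 ∧ f = (j P)⁻¹ * j Q ∧
    ∀ (P' Q' : A) (n n' : ℕ), P' ≠ 0 → f = (j P')⁻¹ * j Q' →
      HasDeg ι δ P n → HasDeg ι δ P' n' → n ≤ n'

/-- `f ∈ F(∂)` has length `n`: the smallest degree of `P` over all presentations
`f = P⁻¹ Q` is `n`. -/
def HasLength {F : Type*} [Field F] {A : Type*} [Ring A] (ι : F →+* A) (δ : A)
    {K : Type*} [DivisionRing K] (j : A →+* K) (f : K) (n : ℕ) : Prop :=
  (∃ P Q : A, P ≠ 0 ∧ f = (j P)⁻¹ * j Q ∧ HasDeg ι δ P n) ∧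
  ∀ (P Q : A) (m : ℕ), P ≠ 0 → f = (j P)⁻¹ * j Q → HasDeg ι δ P m → n ≤ m

/-!
Write `I = P⁻¹ Q` minimally. Because `L(I) = n`, `P` has order `n`, and both families `aᵢ` and
`bᵢ` are linearly independent over the constants `C`: a `C`-linear relation among either lets
two terms be merged (constants commute with `∂⁻¹`), and a sum of `k` terms `uᵢ ∂⁻¹ vᵢ` has a
presentation of order at most `k`, obtained by peeling off one term at a time with `∂ u⁻¹`.

Multiplying `I` by `P` gives `P aᵢ ∂⁻¹ bᵢ = Sᵢ bᵢ + P(aᵢ) ∂⁻¹ bᵢ`, so `Σ P(aᵢ) ∂⁻¹ bᵢ` lies in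
`F⟨∂⟩`; as the `bᵢ` are `C`-independent this forces `P(aᵢ) = 0`. Finally, an operator of order
`n` has at most `n` zeros independent over `C` (reduction of order: if `P(y₀) = 0` with `y₀ ≠ 0`
then `P y₀ = S ∂` with `S` of order `n - 1`), so the `n` independent zeros `aᵢ` span `Zer(P)`.
-/

section

variable {F : Type*} [Field F] {d : F → F} {A : Type*} [Ring A] {ι : F →+* A} {δ : A}

namespace IsDerivation

theorem iterate_map_add (hd : IsDerivation d) (k : ℕ) (x y : F) :
    d^[k] (x + y) = d^[k] x + d^[k] y := by
  induction k generalizing x y with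
  | zero => rfl
  | succ k ih => simp only [Function.iterate_succ_apply, hd.map_add, ih]

theorem iterate_const_mul (hd : IsDerivation d) {c : F} (hc : d c = 0) (k : ℕ) (x : F) :
    d^[k] (c * x) = c * d^[k] x := by
  induction k generalizing x with
  | zero => rfl
  | succ k ih => simp only [Function.iterate_succ_apply, hd.leibniz, hc, zero_mul, zero_add, ih]

theorem map_sum (hd : IsDerivation d) {σ : Type*} (s : Finset σ) (g : σ → F) :
    d (∑ i ∈ s, g i) = ∑ i ∈ s, d (g i) := by
  classical
  induction s using Finset.induction_on with
  | empty => exact hd.map_zero'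
  | insert k s hk ih => rw [sum_insert hk, sum_insert hk, hd.map_add, ih]

end IsDerivation

def DegLT (ι : F →+* A) (δ : A) (P : A) (m : ℕ) : Prop :=
  ∃ b : ℕ → F, P = ∑ i ∈ range m, ι (b i) * δ ^ i

theorem degLT_zero (m : ℕ) : DegLT ι δ 0 m := ⟨0, by simp⟩

theorem degLT_monomial (c : F) (k : ℕ) : DegLT ι δ (ι c * δ ^ k) (k + 1) :=
  ⟨Pi.single k c, by
    rw [sum_eq_single k (fun i _ hi => by rw [Pi.single_eq_of_ne hi, map_zero, zero_mul])
      (fun hk => absurd (self_mem_range_succ k) hk), Pi.single_eq_same]⟩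

namespace DegLT

theorem add {P R : A} {m : ℕ} (hP : DegLT ι δ P m) (hR : DegLT ι δ R m) :
    DegLT ι δ (P + R) m := by
  obtain ⟨b, rfl⟩ := hP
  obtain ⟨c, rfl⟩ := hR
  exact ⟨b + c, by simp only [Pi.add_apply, map_add, add_mul, sum_add_distrib]⟩

theorem mono {P : A} {m m' : ℕ} (hP : DegLT ι δ P m) (hm : m ≤ m') : DegLT ι δ P m' := by
  obtain ⟨b, rfl⟩ := hP
  refine ⟨fun i => if i < m then b i else 0, ?_⟩
  rw [← sum_range_add_sum_Ico _ hm, sum_eq_zero (s := Ico m m') fun i hi => by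
    simp [(mem_Ico.1 hi).1.not_gt], add_zero]
  exact sum_congr rfl fun i hi => by simp [mem_range.1 hi]

theorem sum {σ : Type*} {s : Finset σ} {P : σ → A} {m : ℕ} (hP : ∀ i ∈ s, DegLT ι δ (P i) m) :
    DegLT ι δ (∑ i ∈ s, P i) m := by
  classical
  induction s using Finset.induction_on with
  | empty => exact degLT_zero m
  | insert k s hk ih =>
    rw [sum_insert hk]
    exact (hP k (mem_insert_self k s)).add (ih fun i hi => hP i (mem_insert_of_mem hi))

theorem iota_mul {P : A} {m : ℕ} (hP : DegLT ι δ P m) (c : F) : DegLT ι δ (ι c * P) m := by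
  obtain ⟨b, rfl⟩ := hP
  exact ⟨fun i => c * b i, by simp only [mul_sum, map_mul, mul_assoc]⟩

theorem mul_delta {P : A} {m : ℕ} (hP : DegLT ι δ P m) : DegLT ι δ (P * δ) (m + 1) := by
  obtain ⟨b, rfl⟩ := hP
  rw [sum_mul]
  exact DegLT.sum fun i hi => by
    rw [mul_assoc, ← pow_succ]
    exact (degLT_monomial _ _).mono (by simpa using hi)

end DegLT

theorem hasDeg_iff_exists_add {P : A} {m : ℕ} :
    HasDeg ι δ P m ↔ ∃ x ≠ 0, ∃ W, DegLT ι δ W m ∧ P = ι x * δ ^ m + W := by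
  constructor
  · rintro ⟨b, hb, rfl⟩
    exact ⟨b m, hb, _, ⟨b, rfl⟩, by rw [sum_range_succ, add_comm]⟩
  · rintro ⟨x, hx, _, ⟨w, rfl⟩, rfl⟩
    refine ⟨Function.update w m x, by simpa using hx, ?_⟩
    rw [sum_range_succ, Function.update_self, add_comm]
    congr 1
    exact sum_congr rfl fun i hi => by rw [Function.update_of_ne (mem_range.1 hi).ne]

theorem HasDeg.mul_delta {P : A} {m : ℕ} (hP : HasDeg ι δ P m) :
    HasDeg ι δ (P * δ) (m + 1) := by
  obtain ⟨x, hx, W, hW, rfl⟩ := hasDeg_iff_exists_add.1 hP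
  exact hasDeg_iff_exists_add.2
    ⟨x, hx, W * δ, hW.mul_delta, by rw [add_mul, mul_assoc, ← pow_succ]⟩

theorem hasDeg_iota {c : F} (hc : c ≠ 0) : HasDeg ι δ (ι c) 0 :=
  hasDeg_iff_exists_add.2 ⟨c, hc, 0, degLT_zero 0, by simp⟩

theorem hasDeg_delta : HasDeg ι δ δ 1 :=
  hasDeg_iff_exists_add.2 ⟨1, one_ne_zero, 0, degLT_zero 1, by simp⟩

namespace IsDiffOpRing

theorem delta_mul_sum (hA : IsDiffOpRing d A ι δ) (m : ℕ) (b : ℕ → F) :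
    δ * ∑ i ∈ range m, ι (b i) * δ ^ i
      = (∑ i ∈ range m, ι (b i) * δ ^ i) * δ + ∑ i ∈ range m, ι (d (b i)) * δ ^ i := by
  rw [mul_sum, sum_mul, ← sum_add_distrib]
  refine sum_congr rfl fun i _ => ?_
  rw [← mul_assoc, hA.comm, add_mul, mul_assoc, mul_assoc, ← pow_succ, ← pow_succ']

theorem degLT_delta_mul (hA : IsDiffOpRing d A ι δ) {P : A} {m : ℕ} (hP : DegLT ι δ P m) :
    DegLT ι δ (δ * P) (m + 1) := by
  obtain ⟨b, rfl⟩ := hP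
  rw [hA.delta_mul_sum]
  exact (DegLT.mul_delta ⟨b, rfl⟩).add (DegLT.mono ⟨_, rfl⟩ m.le_succ)

theorem delta_pow_mul_iota (hA : IsDiffOpRing d A ι δ) (c : F) (k : ℕ) :
    ∃ R, DegLT ι δ R k ∧ δ ^ k * ι c = ι c * δ ^ k + R := by
  induction k generalizing c with
  | zero => exact ⟨0, degLT_zero 0, by simp⟩
  | succ k ih =>
    obtain ⟨R, hR, hk⟩ := ih c
    refine ⟨ι (d c) * δ ^ k + δ * R, (degLT_monomial _ _).add (hA.degLT_delta_mul hR), ?_⟩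
    rw [pow_succ', mul_assoc, hk, mul_add, ← mul_assoc, hA.comm]
    noncomm_ring

theorem degLT_mul_iota (hA : IsDiffOpRing d A ι δ) {P : A} {m : ℕ} (hP : DegLT ι δ P m)
    (c : F) : DegLT ι δ (P * ι c) m := by
  obtain ⟨b, rfl⟩ := hP
  rw [sum_mul]
  refine DegLT.sum fun i hi => ?_
  obtain ⟨R, hR, hi'⟩ := hA.delta_pow_mul_iota c i
  rw [mul_assoc, hi', mul_add, ← mul_assoc, ← map_mul]
  exact ((degLT_monomial _ _).add ((hR.mono i.le_succ).iota_mul (b i))).mono (by simpa using hi)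

theorem hasDeg_mul_iota (hA : IsDiffOpRing d A ι δ) {P : A} {m : ℕ} (hP : HasDeg ι δ P m)
    {c : F} (hc : c ≠ 0) : HasDeg ι δ (P * ι c) m := by
  obtain ⟨x, hx, W, hW, rfl⟩ := hasDeg_iff_exists_add.1 hP
  obtain ⟨R, hR, hm⟩ := hA.delta_pow_mul_iota c m
  refine hasDeg_iff_exists_add.2
    ⟨x * c, mul_ne_zero hx hc, _, (hR.iota_mul x).add (hA.degLT_mul_iota hW c), ?_⟩
  rw [add_mul, mul_assoc, hm, map_mul]
  noncomm_ring

theorem hasDeg_delta_mul (hA : IsDiffOpRing d A ι δ) {P : A} {m : ℕ} (hP : HasDeg ι δ P m) :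
    HasDeg ι δ (δ * P) (m + 1) := by
  obtain ⟨x, hx, W, hW, rfl⟩ := hasDeg_iff_exists_add.1 hP
  refine hasDeg_iff_exists_add.2
    ⟨x, hx, _, (degLT_monomial (d x) m).add (hA.degLT_delta_mul hW), ?_⟩
  rw [mul_add, ← mul_assoc, hA.comm, pow_succ']
  noncomm_ring

theorem coeff_eq_zero_of_degLT (hA : IsDiffOpRing d A ι δ) {P : A} {m m' : ℕ} {b : ℕ → F}
    (hP : DegLT ι δ P m) (h : P = ∑ i ∈ range m', ι (b i) * δ ^ i) {i : ℕ} (hmi : m ≤ i)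
    (hi : i < m') : b i = 0 := by
  obtain ⟨c, rfl⟩ := hP
  have hsum : ∀ (m : ℕ) (b : ℕ → F), ∑ i ∈ range m, ι (b i) * δ ^ i
      = (∑ i ∈ range m, Finsupp.single i (b i)).sum fun i x => ι x * δ ^ i := fun m b => by
    rw [← Finsupp.sum_finsetSum_index (by simp) (by simp [add_mul])]
    simp [Finsupp.sum_single_index]
  have hc := congrArg (· i) ((hA.repr _).unique (hsum m c) (h.trans (hsum m' b)))
  simpa [Finsupp.finsetSum_apply, Finsupp.single_apply, hmi.not_gt, hi] using hc.symm

theorem hasDeg_unique (hA : IsDiffOpRing d A ι δ) {P : A} {m m' : ℕ} (h : HasDeg ι δ P m)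
    (h' : HasDeg ι δ P m') : m = m' := by
  obtain ⟨b, hb, hPb⟩ := h
  obtain ⟨b', hb', hPb'⟩ := h'
  by_contra hne
  rcases Nat.lt_or_gt_of_ne hne with hlt | hlt
  · exact hb' (hA.coeff_eq_zero_of_degLT ⟨b, hPb⟩ hPb' hlt m'.lt_succ_self)
  · exact hb (hA.coeff_eq_zero_of_degLT ⟨b', hPb'⟩ hPb hlt m.lt_succ_self)

theorem ne_zero_of_hasDeg (hA : IsDiffOpRing d A ι δ) {P : A} {m : ℕ} (h : HasDeg ι δ P m) :
    P ≠ 0 := by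
  rintro rfl
  obtain ⟨b, hb, h0⟩ := h
  exact hb (hA.coeff_eq_zero_of_degLT (degLT_zero 0) h0 m.zero_le m.lt_succ_self)

theorem exists_degLT (hA : IsDiffOpRing d A ι δ) (P : A) : ∃ m, DegLT ι δ P m := by
  obtain ⟨c, hc, -⟩ := hA.repr P
  refine ⟨c.support.sup id + 1, c, ?_⟩
  rw [hc, Finsupp.sum]
  refine sum_subset (fun i hi => ?_) (fun i _ hi => ?_)
  · exact mem_range.2 (Nat.lt_succ_of_le (le_sup (f := id) hi))
  · rw [Finsupp.notMem_support_iff.1 hi, map_zero, zero_mul]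

theorem exists_hasDeg (hA : IsDiffOpRing d A ι δ) {P : A} (hP : P ≠ 0) :
    ∃ m, HasDeg ι δ P m := by
  obtain ⟨m, hm⟩ := hA.exists_degLT P
  induction m with
  | zero => exact absurd (by simpa [DegLT] using hm) hP
  | succ m ih =>
    obtain ⟨b, hb⟩ := hm
    by_cases hbm : b m = 0
    · exact ih ⟨b, by rwa [sum_range_succ, hbm, map_zero, zero_mul, add_zero] at hb⟩
    · exact ⟨m, b, hbm, hb⟩

theorem delta_ne_zero (hA : IsDiffOpRing d A ι δ) : δ ≠ 0 :=
  hA.ne_zero_of_hasDeg hasDeg_delta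

theorem eq_zero_of_iota_eq_delta_mul (hA : IsDiffOpRing d A ι δ) {c : F} {R : A}
    (h : ι c = δ * R) : c = 0 := by
  by_contra hc
  have h0 := hasDeg_iota (ι := ι) (δ := δ) hc
  rcases eq_or_ne R 0 with rfl | hR
  · exact hA.ne_zero_of_hasDeg h0 (by rw [h, mul_zero])
  · obtain ⟨m, hm⟩ := hA.exists_hasDeg hR
    exact m.succ_ne_zero (hA.hasDeg_unique (h ▸ hA.hasDeg_delta_mul hm) h0)

theorem exists_degLT_succ (hA : IsDiffOpRing d A ι δ) (P : A) (m₀ : ℕ) :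
    ∃ m, m₀ ≤ m ∧ DegLT ι δ P (m + 1) := by
  obtain ⟨m, hm⟩ := hA.exists_degLT P
  exact ⟨m₀ + m, m₀.le_add_right m, hm.mono (by omega)⟩

end IsDiffOpRing

def IsDiffOpAction (d : F → F) (ι : F →+* A) (δ : A) (act : A → F → F) : Prop :=
  ∀ (m : ℕ) (b : ℕ → F), act (∑ i ∈ range (m + 1), ι (b i) * δ ^ i) = diffOpAct d m b

namespace IsDiffOpAction

variable {act : A → F → F}

theorem act_eq_sum (hact : IsDiffOpAction d ι δ act) {P : A} {m : ℕ} {b : ℕ → F}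
    (h : P = ∑ i ∈ range (m + 1), ι (b i) * δ ^ i) (y : F) :
    act P y = ∑ i ∈ range (m + 1), b i * d^[i] y := by
  rw [h, hact]
  rfl

theorem act_zero (hact : IsDiffOpAction d ι δ act) (y : F) : act 0 y = 0 := by
  simpa using hact.act_eq_sum (m := 0) (b := 0) (by simp) y

theorem act_add (hact : IsDiffOpAction d ι δ act) (hA : IsDiffOpRing d A ι δ) (P R : A)
    (y : F) : act (P + R) y = act P y + act R y := by
  obtain ⟨m, -, b, hb⟩ := hA.exists_degLT_succ P 0
  obtain ⟨m', hm', c, hc⟩ := hA.exists_degLT_succ R m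
  obtain ⟨b', hb'⟩ := (show DegLT ι δ P (m + 1) from ⟨b, hb⟩).mono (Nat.succ_le_succ hm')
  have hPR : P + R = ∑ i ∈ range (m' + 1), ι ((b' + c) i) * δ ^ i := by
    simp only [hb', hc, Pi.add_apply, map_add, add_mul, sum_add_distrib]
  simp only [hact.act_eq_sum hPR, hact.act_eq_sum hb', hact.act_eq_sum hc, Pi.add_apply,
    add_mul, sum_add_distrib]

theorem act_sum (hact : IsDiffOpAction d ι δ act) (hA : IsDiffOpRing d A ι δ) {σ : Type*}
    (s : Finset σ) (P : σ → A) (y : F) : act (∑ i ∈ s, P i) y = ∑ i ∈ s, act (P i) y := by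
  classical
  induction s using Finset.induction_on with
  | empty => exact hact.act_zero y
  | insert k s hk ih => rw [sum_insert hk, sum_insert hk, hact.act_add hA, ih]

theorem act_iota_mul (hact : IsDiffOpAction d ι δ act) (hA : IsDiffOpRing d A ι δ) (c : F)
    (P : A) (y : F) : act (ι c * P) y = c * act P y := by
  obtain ⟨m, -, b, hb⟩ := hA.exists_degLT_succ P 0
  have hcP : ι c * P = ∑ i ∈ range (m + 1), ι (c * b i) * δ ^ i := by
    simp only [hb, mul_sum, map_mul, mul_assoc]
  simp only [hact.act_eq_sum hcP, hact.act_eq_sum hb, mul_sum, mul_assoc]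

theorem act_mul_delta (hact : IsDiffOpAction d ι δ act) (hA : IsDiffOpRing d A ι δ) (P : A)
    (y : F) : act (P * δ) y = act P (d y) := by
  obtain ⟨m, -, b, hb⟩ := hA.exists_degLT_succ P 0
  have hPδ : P * δ = ∑ i ∈ range (m + 1 + 1), ι (Nat.casesOn i 0 b) * δ ^ i := by
    rw [sum_range_succ', hb, sum_mul]
    simp [pow_succ, mul_assoc]
  rw [hact.act_eq_sum hPδ, hact.act_eq_sum hb, sum_range_succ']
  simp

theorem act_delta_mul (hact : IsDiffOpAction d ι δ act) (hA : IsDiffOpRing d A ι δ)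
    (hd : IsDerivation d) (P : A) (y : F) : act (δ * P) y = d (act P y) := by
  obtain ⟨m, -, b, hb⟩ := hA.exists_degLT_succ P 0
  rw [hb, hA.delta_mul_sum, hact.act_add hA, hact.act_mul_delta hA, ← hb,
    hact.act_eq_sum hb, hact.act_eq_sum rfl, hact.act_eq_sum hb, hd.map_sum, ← sum_add_distrib]
  refine sum_congr rfl fun i _ => ?_
  rw [hd.leibniz, ← Function.iterate_succ_apply' d, Function.iterate_succ_apply, add_comm]

theorem act_mul (hact : IsDiffOpAction d ι δ act) (hA : IsDiffOpRing d A ι δ)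
    (hd : IsDerivation d) (P R : A) (y : F) : act (P * R) y = act P (act R y) := by
  have hpow : ∀ k, act (δ ^ k * R) y = d^[k] (act R y) := fun k => by
    induction k with
    | zero => rw [pow_zero, one_mul]; rfl
    | succ k ih =>
      rw [pow_succ', mul_assoc, hact.act_delta_mul hA hd, ih, Function.iterate_succ_apply']
  obtain ⟨m, -, b, hb⟩ := hA.exists_degLT_succ P 0
  rw [hact.act_eq_sum hb, hb, sum_mul, hact.act_sum hA]
  exact sum_congr rfl fun i _ => by rw [mul_assoc, hact.act_iota_mul hA, hpow]

theorem act_one (hact : IsDiffOpAction d ι δ act) (y : F) : act 1 y = y := by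
  simpa using hact.act_eq_sum (m := 0) (b := 1) (by simp) y

theorem act_iota (hact : IsDiffOpAction d ι δ act) (hA : IsDiffOpRing d A ι δ) (u y : F) :
    act (ι u) y = u * y := by
  simpa [hact.act_one] using hact.act_iota_mul hA u 1 y

theorem act_map_add (hact : IsDiffOpAction d ι δ act) (hA : IsDiffOpRing d A ι δ)
    (hd : IsDerivation d) (P : A) (y z : F) : act P (y + z) = act P y + act P z := by
  obtain ⟨m, -, b, hb⟩ := hA.exists_degLT_succ P 0
  simp only [hact.act_eq_sum hb, hd.iterate_map_add, mul_add, sum_add_distrib]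

theorem act_const_mul (hact : IsDiffOpAction d ι δ act) (hA : IsDiffOpRing d A ι δ)
    (hd : IsDerivation d) (P : A) {c : F} (hc : d c = 0) (y : F) :
    act P (c * y) = c * act P y := by
  obtain ⟨m, -, b, hb⟩ := hA.exists_degLT_succ P 0
  simp only [hact.act_eq_sum hb, hd.iterate_const_mul hc, mul_sum, mul_left_comm]

theorem exists_eq_mul_delta_add_iota (hact : IsDiffOpAction d ι δ act)
    (hA : IsDiffOpRing d A ι δ) (hd : IsDerivation d) (P : A) :
    ∃ S, P = S * δ + ι (act P 1) := by
  obtain ⟨m, -, b, hb⟩ := hA.exists_degLT_succ P 0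
  have hd1 : ∀ i, d^[i + 1] 1 = 0 := fun i => by
    rw [Function.iterate_succ_apply, hd.map_one', Function.iterate_fixed hd.map_zero']
  have hP1 : act P 1 = b 0 := by
    rw [hact.act_eq_sum hb, sum_range_succ', sum_eq_zero fun i _ => by rw [hd1, mul_zero]]
    simp
  refine ⟨∑ i ∈ range m, ι (b (i + 1)) * δ ^ i, ?_⟩
  rw [hP1, hb, sum_range_succ', sum_mul]
  simp [pow_succ, mul_assoc]

theorem exists_mul_iota_eq_mul_delta (hact : IsDiffOpAction d ι δ act)
    (hA : IsDiffOpRing d A ι δ) (hd : IsDerivation d) {P : A} {n : ℕ} (hP : HasDeg ι δ P n)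
    {u : F} (hu : u ≠ 0) (hPu : act P u = 0) :
    ∃ S m, n = m + 1 ∧ HasDeg ι δ S m ∧ P * ι u = S * δ := by
  obtain ⟨S, hS⟩ := hact.exists_eq_mul_delta_add_iota hA hd (P * ι u)
  rw [hact.act_mul hA hd, hact.act_iota hA, mul_one, hPu, map_zero, add_zero] at hS
  have hPu' := hA.hasDeg_mul_iota hP hu
  have hS0 : S ≠ 0 := by
    rintro rfl
    exact hA.ne_zero_of_hasDeg hPu' (by rw [hS, zero_mul])
  obtain ⟨m, hm⟩ := hA.exists_hasDeg hS0
  exact ⟨S, m, hA.hasDeg_unique hPu' (hS ▸ hm.mul_delta), hm, hS⟩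

def zerSubmodule (hact : IsDiffOpAction d ι δ act) (hA : IsDiffOpRing d A ι δ)
    (hd : IsDerivation d) (P : A) : Submodule (constants F d hd) F where
  carrier := {y | act P y = 0}
  add_mem' {y z} hy hz := by
    simp only [Set.mem_ofPred_eq, hact.act_map_add hA hd] at *
    rw [hy, hz, add_zero]
  zero_mem' := by simpa using hact.act_const_mul hA hd P hd.map_zero' 0
  smul_mem' c y hy := by
    simp only [Set.mem_ofPred_eq, Subfield.smul_def, smul_eq_mul] at *
    rw [hact.act_const_mul hA hd P c.2, hy, mul_zero]

theorem not_linearIndependent_of_act_eq_zero (hact : IsDiffOpAction d ι δ act)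
    (hA : IsDiffOpRing d A ι δ) (hd : IsDerivation d) {n : ℕ} {P : A} (hP : HasDeg ι δ P n)
    {y : Fin (n + 1) → F} (hy : ∀ i, act P (y i) = 0) :
    ¬ LinearIndependent (constants F d hd) y := by
  induction n generalizing P with
  | zero =>
    intro hli
    obtain ⟨S, m, hm, -⟩ := hact.exists_mul_iota_eq_mul_delta hA hd hP (hli.ne_zero 0) (hy 0)
    omega
  | succ n ih =>
    intro hli
    have hy0 := hli.ne_zero 0
    obtain ⟨S, m, hm, hS, hPS⟩ := hact.exists_mul_iota_eq_mul_delta hA hd hP hy0 (hy 0)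
    obtain rfl : m = n := by omega
    rw [← Fin.cons_self_tail y, linearIndependent_finCons] at hli
    -- `z ↦ (z / y 0)'` maps the zeros of `P` to zeros of `S`, and its kernel is `C ∙ y 0`.
    let φ : F →ₗ[constants F d hd] F :=
      { toFun := fun z => d ((y 0)⁻¹ * z)
        map_add' := fun z w => by rw [mul_add, hd.map_add]
        map_smul' := fun c z => by
          change d ((y 0)⁻¹ * (c * z)) = c * d ((y 0)⁻¹ * z)
          rw [mul_left_comm, hd.leibniz, show d (c : F) = 0 from c.2, zero_mul, zero_add] }
    refine ih hS (y := φ ∘ Fin.tail y) (fun i => ?_) (hli.1.map ?_)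
    · calc act S (d ((y 0)⁻¹ * y i.succ))
          = act (P * ι (y 0)) ((y 0)⁻¹ * y i.succ) := by rw [hPS, hact.act_mul_delta hA]
        _ = 0 := by rw [hact.act_mul hA hd, hact.act_iota hA, mul_inv_cancel_left₀ hy0, hy]
    · refine Submodule.disjoint_def.2 fun z hz hφz => by_contra fun hz0 => hli.2 ?_
      have hc : (y 0)⁻¹ * z ∈ constants F d hd := hφz
      convert Submodule.smul_mem _ (⟨(y 0)⁻¹ * z, hc⟩⁻¹ : constants F d hd) hz
      simp [Subfield.smul_def, mul_right_comm, inv_mul_cancel₀ hz0]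

end IsDiffOpAction

variable {K : Type*} [DivisionRing K] {j : A →+* K}

/-- The integration operator `u ∂⁻¹ v`. -/
def intTerm (ι : F →+* A) (δ : A) (j : A →+* K) : F →+ F →+ K :=
  AddMonoidHom.mk'
    (fun u => AddMonoidHom.mk' (fun v => j (ι u) * (j δ)⁻¹ * j (ι v)) fun v w => by
      simp only [map_add, mul_add])
    fun u w => by ext v; simp only [map_add, add_mul, AddMonoidHom.mk'_apply,
      AddMonoidHom.add_apply]

theorem intTerm_apply (u v : F) : intTerm ι δ j u v = j (ι u) * (j δ)⁻¹ * j (ι v) := rfl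

theorem IsQuotientDivisionRing.map_delta_ne_zero (hK : IsQuotientDivisionRing A K j)
    (hA : IsDiffOpRing d A ι δ) : j δ ≠ 0 :=
  (map_ne_zero_iff j hK.inj).2 hA.delta_ne_zero

theorem map_iota_mul_intTerm (w u v : F) :
    j (ι w) * intTerm ι δ j u v = intTerm ι δ j (w * u) v := by
  simp only [intTerm_apply, map_mul, mul_assoc]

theorem map_delta_mul_intTerm (hA : IsDiffOpRing d A ι δ) (hK : IsQuotientDivisionRing A K j)
    (u v : F) : j δ * intTerm ι δ j u v = j (ι (u * v)) + intTerm ι δ j (d u) v := by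
  rw [intTerm_apply, intTerm_apply, ← mul_assoc, ← mul_assoc, ← map_mul, hA.comm, map_add,
    map_mul, add_mul, add_mul, mul_inv_cancel_right₀ (hK.map_delta_ne_zero hA), ← map_mul,
    ← map_mul]

theorem intTerm_const_mul (hA : IsDiffOpRing d A ι δ) {c : F} (hc : d c = 0) (u v : F) :
    intTerm ι δ j u (c * v) = intTerm ι δ j (c * u) v := by
  have hcomm : Commute (j (ι c)) (j δ)⁻¹ := by
    refine Commute.inv_right₀ ?_
    rw [Commute, SemiconjBy, ← map_mul, ← map_mul, hA.comm, hc, map_zero, add_zero]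
  simp only [intTerm_apply, mul_comm c u, map_mul, mul_assoc, hcomm.eq]

theorem IsDiffOpAction.exists_map_mul_intTerm {act : A → F → F}
    (hact : IsDiffOpAction d ι δ act) (hA : IsDiffOpRing d A ι δ) (hd : IsDerivation d)
    (hK : IsQuotientDivisionRing A K j) (P : A) (u v : F) :
    ∃ S, j P * intTerm ι δ j u v = j S + intTerm ι δ j (act P u) v := by
  obtain ⟨S, hS⟩ := hact.exists_eq_mul_delta_add_iota hA hd (P * ι u)
  rw [hact.act_mul hA hd, hact.act_iota hA, mul_one] at hS
  refine ⟨S * ι v, ?_⟩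
  rw [intTerm_apply, intTerm_apply, ← mul_assoc, ← mul_assoc, ← map_mul, hS, map_add, map_mul,
    add_mul, add_mul, mul_inv_cancel_right₀ (hK.map_delta_ne_zero hA), map_mul]

theorem eq_zero_or_eq_zero_of_intTerm_eq (hA : IsDiffOpRing d A ι δ)
    (hK : IsQuotientDivisionRing A K j) {u v : F} {R : A} (h : intTerm ι δ j u v = j R) :
    u = 0 ∨ v = 0 := by
  refine or_iff_not_imp_left.2 fun hu => hA.eq_zero_of_iota_eq_delta_mul (R := ι u⁻¹ * R) ?_
  have hu' : j (ι u) ≠ 0 := (map_ne_zero (j.comp ι)).2 hu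
  apply hK.inj
  rw [map_mul, map_mul, ← h, intTerm_apply,
    show j (ι u⁻¹) = (j (ι u))⁻¹ from map_inv₀ (j.comp ι) u]
  simp only [mul_assoc, inv_mul_cancel_left₀ hu', mul_inv_cancel_left₀ (hK.map_delta_ne_zero hA)]

theorem map_delta_mul_iota_mul_sum_intTerm (hA : IsDiffOpRing d A ι δ)
    (hK : IsQuotientDivisionRing A K j) {σ : Type*} (s : Finset σ) (w : F) (u v : σ → F) :
    j δ * (j (ι w) * ∑ i ∈ s, intTerm ι δ j (u i) (v i))
      = j (∑ i ∈ s, ι (w * u i * v i)) + ∑ i ∈ s, intTerm ι δ j (d (w * u i)) (v i) := by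
  simp only [mul_sum, map_iota_mul_intTerm, map_delta_mul_intTerm hA hK, sum_add_distrib, map_sum]

theorem exists_hasDeg_le_of_eq_add_sum_intTerm (hd : IsDerivation d) (hA : IsDiffOpRing d A ι δ)
    (hK : IsQuotientDivisionRing A K j) {σ : Type*} [DecidableEq σ] (s : Finset σ) (g : A)
    (u v : σ → F) :
    ∃ P Q m, P ≠ 0 ∧ j g + ∑ i ∈ s, intTerm ι δ j (u i) (v i) = (j P)⁻¹ * j Q ∧
      HasDeg ι δ P m ∧ m ≤ s.card := by
  induction s using Finset.induction_on generalizing g u with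
  | empty =>
    have h1 : (1 : A) ≠ 0 := fun h => by simpa using congrArg j h
    exact ⟨1, g, 0, h1, by simp, map_one ι ▸ hasDeg_iota one_ne_zero, le_rfl⟩
  | insert k t hk ih =>
    by_cases huk : u k = 0
    · obtain ⟨P, Q, m, hP, hPQ, hPm, hm⟩ := ih g u
      refine ⟨P, Q, m, hP, by simpa [sum_insert hk, huk] using hPQ, hPm, ?_⟩
      rw [card_insert_of_notMem hk]
      omega
    -- Multiplying by `∂ (u k)⁻¹` removes the `k`-th term of the sum.
    have hx : j δ * (j (ι (u k)⁻¹) * (j g + ∑ i ∈ insert k t, intTerm ι δ j (u i) (v i)))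
        = j (δ * (ι (u k)⁻¹ * g) + ∑ i ∈ insert k t, ι ((u k)⁻¹ * u i * v i))
          + ∑ i ∈ t, intTerm ι δ j (d ((u k)⁻¹ * u i)) (v i) := by
      rw [mul_add, mul_add, map_delta_mul_iota_mul_sum_intTerm hA hK,
        sum_insert hk (f := fun i => intTerm ι δ j (d ((u k)⁻¹ * u i)) (v i)),
        inv_mul_cancel₀ huk, hd.map_one', map_zero, AddMonoidHom.zero_apply, zero_add, map_add,
        map_mul, map_mul, add_assoc]
    obtain ⟨P, Q, m, hP, hPQ, hPm, hm⟩ := ih _ fun i => d ((u k)⁻¹ * u i)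
    have hPm' := hA.hasDeg_mul_iota hPm.mul_delta (inv_ne_zero huk)
    have hw : j (ι (u k)⁻¹) ≠ 0 := (map_ne_zero (j.comp ι)).2 (inv_ne_zero huk)
    refine ⟨P * δ * ι (u k)⁻¹, Q, m + 1, hA.ne_zero_of_hasDeg hPm', ?_, hPm', ?_⟩
    · rw [map_mul, map_mul, mul_inv_rev, mul_inv_rev, mul_assoc, mul_assoc, ← hPQ, ← hx,
        inv_mul_cancel_left₀ (hK.map_delta_ne_zero hA), inv_mul_cancel_left₀ hw]
    · rw [card_insert_of_notMem hk]
      omega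

theorem eq_zero_of_sum_intTerm_eq (hd : IsDerivation d) (hA : IsDiffOpRing d A ι δ)
    (hK : IsQuotientDivisionRing A K j) {σ : Type*} [DecidableEq σ] {v : σ → F} (s : Finset σ)
    (hv : LinearIndepOn (constants F d hd) v s) (u : σ → F) {R : A}
    (h : ∑ i ∈ s, intTerm ι δ j (u i) (v i) = j R) : ∀ i ∈ s, u i = 0 := by
  induction s using Finset.strongInduction generalizing u R with
  | H s ih =>
  by_contra! ⟨k, hk, huk⟩
  have herase : ∑ i ∈ s.erase k, intTerm ι δ j (d ((u k)⁻¹ * u i)) (v i)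
      = j (δ * (ι (u k)⁻¹ * R) - ∑ i ∈ s, ι ((u k)⁻¹ * u i * v i)) := by
    rw [map_sub, map_mul, map_mul, ← h, map_delta_mul_iota_mul_sum_intTerm hA hK, map_sum,
      add_sub_cancel_left, ← add_sum_erase s _ hk, inv_mul_cancel₀ huk, hd.map_one', map_zero,
      AddMonoidHom.zero_apply, zero_add]
  have hconst : ∀ i ∈ s, d ((u k)⁻¹ * u i) = 0 := fun i hi => by
    rcases eq_or_ne i k with rfl | hik
    · rw [inv_mul_cancel₀ huk, hd.map_one']
    · exact ih _ (erase_ssubset hk) (hv.mono (by simp)) _ herase i (mem_erase.2 ⟨hik, hi⟩)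
  set B := ∑ i ∈ s, (u k)⁻¹ * u i * v i
  have hB : B ≠ 0 := fun hB => by
    have hcoeff := linearIndepOn_finset_iff.1 hv
      (fun i => if hi : i ∈ s then ⟨(u k)⁻¹ * u i, hconst i hi⟩ else 0)
      (by rw [← hB]; exact sum_congr rfl fun i hi => by simp [hi, Subfield.smul_def]) k hk
    simp [hk, huk, Subtype.ext_iff] at hcoeff
  -- All `u i` are constant multiples of `u k`, so the sum collapses to `u k ∂⁻¹ B`.
  have hsum : ∑ i ∈ s, intTerm ι δ j (u i) (v i) = intTerm ι δ j (u k) B := by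
    rw [map_sum]
    refine sum_congr rfl fun i hi => ?_
    rw [intTerm_const_mul hA (hconst i hi), mul_comm, mul_inv_cancel_left₀ huk]
  exact (eq_zero_or_eq_zero_of_intTerm_eq hA hK (hsum ▸ h)).elim huk hB

theorem exists_sum_erase_eq_of_not_linearIndependent {R M N L σ : Type*} [Field R]
    [AddCommGroup M] [Module R M] [AddCommGroup N] [Module R N] [AddCommMonoid L] [Fintype σ]
    [DecidableEq σ] (T : M →+ N →+ L) (hT : ∀ (c : R) u v, T (c • u) v = T u (c • v))
    (u : σ → M) {v : σ → N} (hv : ¬ LinearIndependent R v) :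
    ∃ k, ∃ u' : σ → M, ∑ i, T (u i) (v i) = ∑ i ∈ univ.erase k, T (u' i) (v i) := by
  obtain ⟨g, hg, k, hk⟩ := Fintype.not_linearIndependent_iff.1 hv
  have hvk : v k = ∑ i ∈ univ.erase k, (-(g k)⁻¹ * g i) • v i := by
    rw [← add_sum_erase _ _ (mem_univ k), add_eq_zero_iff_eq_neg] at hg
    rw [← inv_smul_smul₀ hk (v k), hg, smul_neg, smul_sum, ← sum_neg_distrib]
    simp only [mul_smul, neg_smul]
  refine ⟨k, fun i => u i + (-(g k)⁻¹ * g i) • u k, ?_⟩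
  rw [← add_sum_erase _ _ (mem_univ k), hvk, map_sum, ← sum_add_distrib]
  exact sum_congr rfl fun i _ => by rw [← hT, map_add, AddMonoidHom.add_apply, add_comm]

theorem linearIndependent_of_hasLength (hd : IsDerivation d) (hA : IsDiffOpRing d A ι δ)
    (hK : IsQuotientDivisionRing A K j) {σ : Type*} [Fintype σ] [DecidableEq σ] {g : A}
    {u v : σ → F}
    (h : HasLength ι δ j (j g + ∑ i, intTerm ι δ j (u i) (v i)) (Fintype.card σ)) :
    LinearIndependent (constants F d hd) u ∧ LinearIndependent (constants F d hd) v := by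
  have hT : ∀ (c : constants F d hd) u v, intTerm ι δ j u (c • v) = intTerm ι δ j (c • u) v :=
    fun c u v => intTerm_const_mul hA c.2 u v
  have hshort : ∀ (k : σ) (u' v' : σ → F), ∑ i, intTerm ι δ j (u i) (v i)
      ≠ ∑ i ∈ univ.erase k, intTerm ι δ j (u' i) (v' i) := fun k u' v' heq => by
    obtain ⟨P, Q, m, hP, hPQ, hPm, hm⟩ :=
      exists_hasDeg_le_of_eq_add_sum_intTerm hd hA hK (univ.erase k) g u' v'
    have hlen := h.2 P Q m hP (heq ▸ hPQ) hPm
    have hcard := Fintype.card_pos_iff.2 ⟨k⟩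
    rw [card_erase_of_mem (mem_univ k), card_univ] at hm
    omega
  constructor
  · by_contra hu
    obtain ⟨k, v', hk⟩ := exists_sum_erase_eq_of_not_linearIndependent (intTerm ι δ j).flip
      (fun c v u => hT c u v) v hu
    exact hshort k u v' hk
  · by_contra hv
    obtain ⟨k, u', hk⟩ := exists_sum_erase_eq_of_not_linearIndependent (intTerm ι δ j)
      (fun c u v => (hT c u v).symm) u hv
    exact hshort k u' v hk

theorem IsDiffOpAction.act_eq_zero_of_eq_inv_mul {act : A → F → F}
    (hact : IsDiffOpAction d ι δ act) (hA : IsDiffOpRing d A ι δ) (hd : IsDerivation d)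
    (hK : IsQuotientDivisionRing A K j) {σ : Type*} [Fintype σ] [DecidableEq σ] {g : A}
    {u v : σ → F} (hv : LinearIndependent (constants F d hd) v) {P Q : A} (hP : P ≠ 0)
    (h : j g + ∑ i, intTerm ι δ j (u i) (v i) = (j P)⁻¹ * j Q) (i : σ) : act P (u i) = 0 := by
  choose S hS using fun i => hact.exists_map_mul_intTerm hA hd hK P (u i) (v i)
  have hQ : j Q = j P * j g + ∑ i, (j (S i) + intTerm ι δ j (act P (u i)) (v i)) := by
    rw [← sum_congr rfl fun i _ => hS i, ← mul_sum, ← mul_add, h,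
      mul_inv_cancel_left₀ ((map_ne_zero_iff j hK.inj).2 hP)]
  have hpoles : ∑ i, intTerm ι δ j (act P (u i)) (v i) = j (Q - P * g - ∑ i, S i) := by
    rw [map_sub, map_sub, map_mul, map_sum, hQ, sum_add_distrib]
    abel
  exact eq_zero_of_sum_intTerm_eq hd hA hK univ (by rwa [coe_univ, linearIndepOn_univ_iff]) _
    hpoles i (mem_univ i)

theorem IsMinPres.hasDeg_of_hasLength (hA : IsDiffOpRing d A ι δ) {f : K} {P Q : A}
    (hPQ : IsMinPres ι δ j f P Q) {n : ℕ} (hn : HasLength ι δ j f n) : HasDeg ι δ P n := by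
  obtain ⟨hP, hf, hmin⟩ := hPQ
  obtain ⟨m, hm⟩ := hA.exists_hasDeg hP
  obtain ⟨P₀, Q₀, hP₀, hf₀, hn₀⟩ := hn.1
  obtain rfl : m = n := le_antisymm (hmin P₀ Q₀ m n hP₀ hf₀ hm hn₀) (hn.2 P Q m hP hf hm)
  exact hm

end

theorem poles_of_integration_operator_general {F : Type*} [Field F]
    (d : F → F) (hd : IsDerivation d)
    {A : Type*} [Ring A] (ι : F →+* A) (δ : A) (hA : IsDiffOpRing d A ι δ)
    (act : A → F → F)
    (hact : ∀ (m : ℕ) (b : ℕ → F),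
      act (∑ i ∈ Finset.range (m + 1), ι (b i) * δ ^ i) = diffOpAct d m b)
    {K : Type*} [DivisionRing K] (j : A →+* K) (hK : IsQuotientDivisionRing A K j)
    (n : ℕ) (a : F) (aa bb : ℕ → F) (f : K)
    (hf : f = j (ι a) + ∑ i ∈ Finset.range n, j (ι (aa i)) * (j δ)⁻¹ * j (ι (bb i)))
    (hn : HasLength ι δ j f n)
    (P Q : A) (hPQ : IsMinPres ι δ j f P Q) :
    {y : F | act P y = 0}
      = (Submodule.span (constants F d hd) (Set.range fun i : Fin n => aa i) : Set F) := by
  replace hact : IsDiffOpAction d ι δ act := hact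
  have hPn := hPQ.hasDeg_of_hasLength hA hn
  replace hf : f = j (ι a) + ∑ i : Fin n, intTerm ι δ j (aa i) (bb i) := by
    rw [hf, ← Fin.sum_univ_eq_sum_range]
    rfl
  subst hf
  obtain ⟨haa, hbb⟩ := linearIndependent_of_hasLength hd hA hK (by rwa [Fintype.card_fin])
  have hzero := hact.act_eq_zero_of_eq_inv_mul hA hd hK hbb hPQ.1 hPQ.2.1
  refine Set.Subset.antisymm (fun y hy => by_contra fun hy' => ?_) ?_
  · exact hact.not_linearIndependent_of_act_eq_zero hA hd hPn (Fin.cases hy hzero)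
      (linearIndependent_finCons.2 ⟨haa, hy'⟩)
  · exact Submodule.span_le (p := hact.zerSubmodule hA hd P) |>.2 (Set.range_subset_iff.2 hzero)

/-- Let `I = a + Σ_{i=1}^n aᵢ ∂⁻¹ bᵢ ∈ F⟨∂⁻¹⟩` with `n = L(I)`. Then
`Pol(I) = C a₁ + ⋯ + C aₙ`, the `C`-linear span of `a₁, …, aₙ` (where `Pol(I) = Zer(P)` for a
minimal presentation `I = P⁻¹ Q`). -/
theorem poles_of_integration_operator {F : Type*} [Field F] [CharZero F]
    (d : F → F) (hd : IsDerivation d)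
    (halg : IsAlgClosed (constants F d hd))
    (hne : constants F d hd ≠ ⊤)
    {A : Type*} [Ring A] (ι : F →+* A) (δ : A) (hA : IsDiffOpRing d A ι δ)
    (act : A → F → F)
    (hact : ∀ (m : ℕ) (b : ℕ → F),
      act (∑ i ∈ Finset.range (m + 1), ι (b i) * δ ^ i) = diffOpAct d m b)
    {K : Type*} [DivisionRing K] (j : A →+* K) (hK : IsQuotientDivisionRing A K j)
    (n : ℕ) (a : F) (aa bb : ℕ → F) (f : K)
    (hf : f = j (ι a) + ∑ i ∈ Finset.range n, j (ι (aa i)) * (j δ)⁻¹ * j (ι (bb i)))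
    (hn : HasLength ι δ j f n)
    (P Q : A) (hPQ : IsMinPres ι δ j f P Q) :
    {y : F | act P y = 0}
      = (Submodule.span (constants F d hd) (Set.range fun i : Fin n => aa i) : Set F) :=
  poles_of_integration_operator_general d hd ι δ hA act hact j hK n a aa bb f hf hn P Q hPQ
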